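/- Fix κ ∈ (0,4), an integer N ≥ 2, set M = ⌊N/2⌋, and fix real numbers x₁ < x₂ < ⋯ < x_{N+1}. Then the integral Z_N = ∫_{x_{N+1} < z₁ < ⋯ < z_M} ∏_{1≤i≤N, 1≤j≤M} (z_j - x_i)^{-4/κ} ∏_{1≤j≤M} (z_j - x_{N+1})^{(6-κ)/κ} ∏_{1≤i<j≤M} (z_j - z_i)^{8/κ} dz₁⋯dz_M is finite and strictly positive. -/
import Mathlib


open MeasureTheory Real Set

/-- Integrand of the partition function `Z_N` (odd-index hitting points). The points
`x 0, …, x (N-1)` are `x₁, …, x_N` and `x (Fin.last N)` is `x_{N+1}`. -/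
noncomputable def Zdens (κ : ℝ) (N M : ℕ) (x : Fin (N + 1) → ℝ) (z : Fin M → ℝ) : ℝ :=
  (∏ i : Fin N, ∏ j : Fin M, (z j - x i.castSucc) ^ (-4 / κ)) *
    (∏ j : Fin M, (z j - x (Fin.last N)) ^ ((6 - κ) / κ)) *
    ∏ p ∈ Finset.univ.filter (fun p : Fin M × Fin M => p.1 < p.2), (z p.2 - z p.1) ^ (8 / κ)

/-- The unbounded simplex `{x_{N+1} < z₁ < ⋯ < z_M}`. -/
def Zdom (N M : ℕ) (x : Fin (N + 1) → ℝ) : Set (Fin M → ℝ) :=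
  {z | (∀ j, x (Fin.last N) < z j) ∧ StrictMono z}

theorem stmt2 (κ : ℝ) (hκ : κ ∈ Set.Ioo (0:ℝ) 4) (N : ℕ) (hN : 2 ≤ N)
    (x : Fin (N + 1) → ℝ) (hx : StrictMono x) :
    IntegrableOn (Zdens κ N (N / 2) x) (Zdom N (N / 2) x) volume ∧
    0 < ∫ z in Zdom N (N / 2) x, Zdens κ N (N / 2) x z := by
  obtain ⟨hκ0, hκ4⟩ := hκ
  set M := N / 2 with hMdef
  set a := x (Fin.last N) with hadef
  have hNpos : 0 < N := by omega
  have hMpos : 0 < M := by omega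
  have hMN : 2 * M ≤ N := by omega
  -- the minimal distance from `a` to the other marked points
  have hNe : (Finset.univ : Finset (Fin N)).Nonempty := ⟨⟨0, hNpos⟩, Finset.mem_univ _⟩
  set δ := Finset.univ.inf' hNe (fun i : Fin N => a - x i.castSucc) with hδdef
  have hδ_le : ∀ i : Fin N, δ ≤ a - x i.castSucc := fun i => Finset.inf'_le _ (Finset.mem_univ i)
  have hδpos : 0 < δ := by
    rw [hδdef, Finset.lt_inf'_iff]
    intro i _
    have : x i.castSucc < a := hx (Fin.castSucc_lt_last i)
    linarith
  -- the dominating exponent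
  set E : ℝ := (8 * ((M : ℝ) - 1) + 6 - κ - 4 * N) / κ with hEdef
  have hE : E < -1 := by
    rw [hEdef, div_lt_iff₀ hκ0]
    have h1 : (2 * M : ℝ) ≤ (N : ℝ) := by exact_mod_cast hMN
    push_cast at h1
    linarith
  -- the per-coordinate exponents
  set c : Fin M → ℕ := fun j => (Finset.univ.filter (fun i : Fin M => i < j)).card with hcdef
  have hc_le : ∀ j, (c j : ℝ) ≤ (M : ℝ) - 1 := by
    intro j
    have hsub : (Finset.univ.filter (fun i : Fin M => i < j)) ⊆ Finset.univ.erase j := by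
      intro i hi
      simp only [Finset.mem_filter] at hi
      exact Finset.mem_erase.2 ⟨ne_of_lt hi.2, Finset.mem_univ _⟩
    have h1 : c j ≤ M - 1 := by
      calc c j ≤ (Finset.univ.erase j).card := Finset.card_le_card hsub
        _ = M - 1 := by
          rw [Finset.card_erase_of_mem (Finset.mem_univ _)]
          simp
    have h2 : ((c j : ℕ) : ℝ) ≤ ((M - 1 : ℕ) : ℝ) := Nat.cast_le.2 h1
    have h3 : ((M - 1 : ℕ) : ℝ) = (M : ℝ) - 1 := by
      rw [Nat.cast_sub hMpos]
      simp
    linarith [h2, h3.le]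
  set e : Fin M → ℝ := fun j => (8 * (c j : ℝ) + 6 - κ - 4 * N) / κ with hedef
  have he_le : ∀ j, e j ≤ E := by
    intro j
    have h := hc_le j
    simp only [hedef, hEdef]
    gcongr
  -- the dominating function
  set h0 : ℝ → ℝ := (Ioi δ).indicator (fun u => u ^ E) with hh0def
  have hh0int : Integrable h0 := by
    rw [hh0def, integrable_indicator_iff measurableSet_Ioi]
    exact integrableOn_Ioi_rpow_of_lt hE hδpos
  set g : Fin M → ℝ → ℝ := fun j t => δ ^ (e j - E) * h0 (t + (δ - a)) with hgdef
  have hgint : ∀ j, Integrable (g j) := fun j => (hh0int.comp_add_right (δ - a)).const_mul _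
  have hGint : Integrable (fun z : Fin M → ℝ => ∏ j, g j (z j)) := Integrable.fintype_prod hgint
  have hgval : ∀ (j : Fin M) (t : ℝ), a < t → g j t = δ ^ (e j - E) * (t - a + δ) ^ E := by
    intro j t ht
    rw [hgdef]
    simp only
    rw [hh0def, Set.indicator_of_mem (by simp only [mem_Ioi]; linarith)]
    congr 1
    ring_nf
  -- positivity of the integrand on the domain
  have hpos : ∀ z ∈ Zdom N M x, 0 < Zdens κ N M x z := by
    rintro z ⟨hza, hzm⟩
    unfold Zdens
    refine mul_pos (mul_pos ?_ ?_) ?_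
    · exact Finset.prod_pos fun i _ => Finset.prod_pos fun j _ =>
        rpow_pos_of_pos (by have h1 := hza j; have h2 := hx (Fin.castSucc_lt_last i); linarith) _
    · exact Finset.prod_pos fun j _ => rpow_pos_of_pos (by have := hza j; linarith) _
    · exact Finset.prod_pos fun p hp =>
        rpow_pos_of_pos (sub_pos.2 (hzm (Finset.mem_filter.1 hp).2)) _
  -- the pointwise bound
  have key : ∀ z ∈ Zdom N M x, Zdens κ N M x z ≤ ∏ j, g j (z j) := by
    rintro z ⟨hza, hzm⟩
    have hu : ∀ j, 0 < z j - a + δ := fun j => by have := hza j; linarith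
    have huδ : ∀ j, δ ≤ z j - a + δ := fun j => by have := hza j; linarith
    have hneg : -4 / κ ≤ 0 := div_nonpos_of_nonpos_of_nonneg (by norm_num) hκ0.le
    have h6 : 0 ≤ (6 - κ) / κ := div_nonneg (by linarith) hκ0.le
    have h8 : 0 ≤ 8 / κ := div_nonneg (by norm_num) hκ0.le
    have step1 : Zdens κ N M x z ≤
        (∏ i : Fin N, ∏ j : Fin M, (z j - a + δ) ^ (-4 / κ)) *
        (∏ j : Fin M, (z j - a + δ) ^ ((6 - κ) / κ)) *
        ∏ p ∈ Finset.univ.filter (fun p : Fin M × Fin M => p.1 < p.2),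
          (z p.2 - a + δ) ^ (8 / κ) := by
      unfold Zdens
      have hT1 : (∏ i : Fin N, ∏ j : Fin M, (z j - x i.castSucc) ^ (-4 / κ)) ≤
          ∏ i : Fin N, ∏ j : Fin M, (z j - a + δ) ^ (-4 / κ) := by
        refine Finset.prod_le_prod (fun i _ => Finset.prod_nonneg fun j _ => rpow_nonneg ?_ _)
          (fun i _ => Finset.prod_le_prod (fun j _ => rpow_nonneg ?_ _) (fun j _ => ?_))
        · have h1 := hza j; have h2 := hx (Fin.castSucc_lt_last i); linarith
        · have h1 := hza j; have h2 := hx (Fin.castSucc_lt_last i); linarith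
        · exact rpow_le_rpow_of_nonpos (hu j) (by have := hδ_le i; linarith) hneg
      have hT2 : (∏ j : Fin M, (z j - a) ^ ((6 - κ) / κ)) ≤
          ∏ j : Fin M, (z j - a + δ) ^ ((6 - κ) / κ) := by
        refine Finset.prod_le_prod (fun j _ => rpow_nonneg ?_ _) (fun j _ => ?_)
        · have := hza j; linarith
        · exact rpow_le_rpow (by have := hza j; linarith) (by linarith) h6
      have hT3 : (∏ p ∈ Finset.univ.filter (fun p : Fin M × Fin M => p.1 < p.2),
            (z p.2 - z p.1) ^ (8 / κ)) ≤
          ∏ p ∈ Finset.univ.filter (fun p : Fin M × Fin M => p.1 < p.2),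
            (z p.2 - a + δ) ^ (8 / κ) := by
        refine Finset.prod_le_prod (fun p hp => rpow_nonneg ?_ _) (fun p hp => ?_)
        · exact sub_nonneg.2 (hzm (Finset.mem_filter.1 hp).2).le
        · refine rpow_le_rpow (sub_nonneg.2 (hzm (Finset.mem_filter.1 hp).2).le) ?_ h8
          have h1 := hza p.1
          linarith
      have hn1 : 0 ≤ ∏ i : Fin N, ∏ j : Fin M, (z j - a + δ) ^ (-4 / κ) :=
        Finset.prod_nonneg fun i _ => Finset.prod_nonneg fun j _ => rpow_nonneg (hu j).le _
      have hn2 : 0 ≤ ∏ j : Fin M, (z j - a) ^ ((6 - κ) / κ) :=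
        Finset.prod_nonneg fun j _ => rpow_nonneg (by have := hza j; linarith) _
      have hn2' : 0 ≤ ∏ j : Fin M, (z j - a + δ) ^ ((6 - κ) / κ) :=
        Finset.prod_nonneg fun j _ => rpow_nonneg (hu j).le _
      have hn3 : 0 ≤ ∏ p ∈ Finset.univ.filter (fun p : Fin M × Fin M => p.1 < p.2),
          (z p.2 - z p.1) ^ (8 / κ) :=
        Finset.prod_nonneg fun p hp =>
          rpow_nonneg (sub_nonneg.2 (hzm (Finset.mem_filter.1 hp).2).le) _
      exact mul_le_mul (mul_le_mul hT1 hT2 hn2 hn1) hT3 hn3 (mul_nonneg hn1 hn2')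
    have step2 : (∏ i : Fin N, ∏ j : Fin M, (z j - a + δ) ^ (-4 / κ)) *
        (∏ j : Fin M, (z j - a + δ) ^ ((6 - κ) / κ)) *
        (∏ p ∈ Finset.univ.filter (fun p : Fin M × Fin M => p.1 < p.2),
          (z p.2 - a + δ) ^ (8 / κ)) = ∏ j, (z j - a + δ) ^ e j := by
      have hp1 : (∏ i : Fin N, ∏ j : Fin M, (z j - a + δ) ^ (-4 / κ)) =
          ∏ j : Fin M, ((z j - a + δ) ^ (-4 / κ)) ^ N := by
        rw [Finset.prod_const, ← Finset.prod_pow]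
        simp
      have hp3 : (∏ p ∈ Finset.univ.filter (fun p : Fin M × Fin M => p.1 < p.2),
            (z p.2 - a + δ) ^ (8 / κ)) =
          ∏ j : Fin M, ((z j - a + δ) ^ (8 / κ)) ^ (c j) := by
        rw [Finset.prod_filter, ← Finset.univ_product_univ, Finset.prod_product_right]
        refine Finset.prod_congr rfl fun j _ => ?_
        simp only
        rw [← Finset.prod_filter, Finset.prod_const]
      rw [hp1, hp3, ← Finset.prod_mul_distrib, ← Finset.prod_mul_distrib]
      refine Finset.prod_congr rfl fun j _ => ?_
      rw [← rpow_natCast ((z j - a + δ) ^ (-4 / κ)) N, ← rpow_mul (hu j).le,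
        ← rpow_natCast ((z j - a + δ) ^ (8 / κ)) (c j), ← rpow_mul (hu j).le,
        ← rpow_add (hu j), ← rpow_add (hu j)]
      congr 1
      rw [hedef]
      field_simp
      ring
    have step3 : ∀ j : Fin M, (z j - a + δ) ^ e j ≤ g j (z j) := by
      intro j
      rw [hgval j (z j) (hza j)]
      have hsplit : (z j - a + δ) ^ e j = (z j - a + δ) ^ (e j - E) * (z j - a + δ) ^ E := by
        rw [← rpow_add (hu j)]
        ring_nf
      rw [hsplit]
      exact mul_le_mul_of_nonneg_right
        (rpow_le_rpow_of_nonpos hδpos (huδ j) (by linarith [he_le j]))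
        (rpow_nonneg (hu j).le _)
    calc Zdens κ N M x z ≤ _ := step1
      _ = ∏ j, (z j - a + δ) ^ e j := step2
      _ ≤ ∏ j, g j (z j) :=
        Finset.prod_le_prod (fun j _ => rpow_nonneg (hu j).le _) (fun j _ => step3 j)
  -- measurability
  have hmeas : Measurable (Zdens κ N M x) := by
    unfold Zdens
    fun_prop
  -- the domain is open, measurable and nonempty
  have hopen : IsOpen (Zdom N M x) := by
    have hset : Zdom N M x = (⋂ j, {z : Fin M → ℝ | a < z j}) ∩
        ⋂ p : Fin M × Fin M, {z : Fin M → ℝ | p.1 < p.2 → z p.1 < z p.2} := by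
      ext z
      simp only [Zdom, mem_setOf_eq, mem_inter_iff, mem_iInter]
      constructor
      · rintro ⟨h1, h2⟩
        exact ⟨h1, fun p hp => h2 hp⟩
      · rintro ⟨h1, h2⟩
        exact ⟨h1, fun i j hij => h2 (i, j) hij⟩
    rw [hset]
    refine IsOpen.inter (isOpen_iInter_of_finite fun j =>
      isOpen_lt continuous_const (continuous_apply j))
      (isOpen_iInter_of_finite fun p => ?_)
    by_cases hp : p.1 < p.2
    · have : {z : Fin M → ℝ | p.1 < p.2 → z p.1 < z p.2} = {z | z p.1 < z p.2} := by
        ext z; simp [hp]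
      rw [this]
      exact isOpen_lt (continuous_apply p.1) (continuous_apply p.2)
    · have : {z : Fin M → ℝ | p.1 < p.2 → z p.1 < z p.2} = univ := by
        ext z; simp [hp]
      rw [this]
      exact isOpen_univ
  have hmeasSet : MeasurableSet (Zdom N M x) := hopen.measurableSet
  have hne : (Zdom N M x).Nonempty := by
    refine ⟨fun j => a + 1 + (j : ℕ), ?_, ?_⟩
    · intro j
      have : (0:ℝ) ≤ ((j : ℕ) : ℝ) := Nat.cast_nonneg _
      simp only
      linarith
    · intro i j hij
      simp only
      have : ((i : ℕ) : ℝ) < ((j : ℕ) : ℝ) := Nat.cast_lt.2 hij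
      linarith
  -- integrability
  have hInt : IntegrableOn (Zdens κ N M x) (Zdom N M x) volume := by
    refine Integrable.mono' hGint.integrableOn hmeas.aestronglyMeasurable.restrict ?_
    rw [ae_restrict_iff' hmeasSet]
    exact ae_of_all _ fun z hz => by
      rw [Real.norm_eq_abs, abs_of_pos (hpos z hz)]
      exact key z hz
  refine ⟨hInt, ?_⟩
  rw [setIntegral_pos_iff_support_of_nonneg_ae ?_ hInt]
  · refine lt_of_lt_of_le (hopen.measure_pos volume hne) (measure_mono ?_)
    intro z hz
    exact ⟨ne_of_gt (hpos z hz), hz⟩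
  · rw [Filter.EventuallyLE, ae_restrict_iff' hmeasSet]
    exact ae_of_all _ fun z hz => (hpos z hz).le
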